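/- Every saturated precolored convex Θ^3-drawing of a graph G on n ≥ 3 vertices has at least 5n/2 − 6 edges, i.e., 2·|E(G)| ≥ 5n − 12. -/

import Mathlib

/-- Points of the plane. -/
abbrev Pt : Type := ℝ × ℝ

/-- Two straight-line segments cross if some point lies in the interior
(open segment) of both. -/
def SegCross (a b c d : Pt) : Prop :=
  ∃ x : Pt, x ∈ openSegment ℝ a b ∧ x ∈ openSegment ℝ c d

/-- Two edges (unordered pairs of vertices) cross in the drawing `p`. -/
def EdgeCross {V : Type} (p : V → Pt) (e f : Sym2 V) : Prop :=
  ∃ u v x y : V, e = s(u, v) ∧ f = s(x, y) ∧ SegCross (p u) (p v) (p x) (p y)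

/-- The drawing `p` is injective and no three vertex points are collinear. -/
def GenPos {V : Type} (p : V → Pt) : Prop :=
  Function.Injective p ∧
    ∀ u v w : V, u ≠ v → u ≠ w → v ≠ w → ¬ Collinear ℝ ({p u, p v, p w} : Set Pt)

/-- The vertex points are in convex position: every vertex point is an extreme
point of the convex hull of all vertex points. -/
def ConvexPos {V : Type} (p : V → Pt) : Prop :=
  ∀ v : V, p v ∈ Set.extremePoints ℝ (convexHull ℝ (Set.range p))

/-- A `k`-coloring of the edges of `G` is crossing-free if no two distinct
edges of the same color cross. -/
def CrossingFree {V : Type} {k : ℕ} (G : SimpleGraph V) (p : V → Pt)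
    (φ : Sym2 V → Fin k) : Prop :=
  ∀ e ∈ G.edgeSet, ∀ f ∈ G.edgeSet, e ≠ f → φ e = φ f → ¬ EdgeCross p e f

open scoped Classical

/-- A precolored drawing `(G, p, φ)` is saturated: for every pair of distinct
non-adjacent vertices and every color `c`, assigning color `c` to the new edge
`uv` yields a coloring that is not crossing-free. -/
def PrecoloredSaturated {V : Type} {k : ℕ} (G : SimpleGraph V) (p : V → Pt)
    (φ : Sym2 V → Fin k) : Prop :=
  ∀ u v : V, u ≠ v → ¬ G.Adj u v → ∀ c : Fin k,
    ¬ CrossingFree (G ⊔ SimpleGraph.fromEdgeSet {s(u, v)}) p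
      (fun e => if e = s(u, v) then c else φ e)

/-- A (non-precolored) drawing of `G` is saturated for thickness `k`: for every
pair of distinct non-adjacent vertices `u, v`, the drawing of `G + uv` admits
no crossing-free `k`-coloring. -/
def Saturated {V : Type} (k : ℕ) (G : SimpleGraph V) (p : V → Pt) : Prop :=
  ∀ u v : V, u ≠ v → ¬ G.Adj u v →
    ∀ φ : Sym2 V → Fin k,
      ¬ CrossingFree (G ⊔ SimpleGraph.fromEdgeSet {s(u, v)}) p φ

/-- Twice the signed area of the triangle `a b c`. -/
def det2 (a b c : Pt) : ℝ :=
  (b.1 - a.1) * (c.2 - a.2) - (b.2 - a.2) * (c.1 - a.1)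

/-- An edge is an outer edge if its endpoints are consecutive on the boundary
of the convex hull of the vertex points, i.e. all other vertex points lie
strictly on one side of the line through its endpoints. -/
def IsOuterEdge {V : Type} (p : V → Pt) (e : Sym2 V) : Prop :=
  ∃ u v : V, e = s(u, v) ∧
    ((∀ w : V, w ≠ u → w ≠ v → 0 < det2 (p u) (p v) (p w)) ∨
     (∀ w : V, w ≠ u → w ≠ v → det2 (p u) (p v) (p w) < 0))

/-!
Order the vertices counterclockwise along the convex hull (the angular order seen from one
vertex is transitive because no vertex lies inside a triangle of others). Two segments then
cross exactly when their endpoints interleave, so everything becomes a statement about chords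
of a convex `n`-gon. Nothing crosses a side, so saturation forces all `n` sides into `G`. The
diagonals of `G` of a color `c` form a non-crossing family `A_c`, and by saturation every
diagonal crossing no member of `A_c` is an edge of `G` of another color. A non-crossing family
of `a` diagonals leaves at least `2n - 6 - 2a` diagonals free, so the set `U` of diagonal edges
satisfies `2n - 6 ≤ |U| + |A_c|`. Summing over the three colors gives `6n - 18 ≤ 4|U|`, hence
`2|E| ≥ 2n + 2|U| ≥ 5n - 9`.
-/

lemma det2_rotate (a b c : Pt) : det2 b c a = det2 a b c := by
  simp only [det2]; ring

lemma det2_swap (a b c : Pt) : det2 a c b = -det2 a b c := by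
  simp only [det2]; ring

@[simp] lemma det2_self_left (a b : Pt) : det2 a b a = 0 := by
  simp only [det2]; ring

@[simp] lemma det2_self_right (a b : Pt) : det2 a b b = 0 := by
  simp only [det2]; ring

lemma det2_one_sub_smul_add_smul (a b c d : Pt) (t : ℝ) :
    det2 a b ((1 - t) • c + t • d) = (1 - t) * det2 a b c + t * det2 a b d := by
  simp only [det2, Prod.fst_add, Prod.snd_add, Prod.smul_fst, Prod.smul_snd, smul_eq_mul]; ring

lemma det2_eq_add_add (a b c w : Pt) :
    det2 a b c = det2 b c w + det2 c a w + det2 a b w := by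
  simp only [det2]; ring

lemma collinear_of_det2_eq_zero {a b c : Pt} (h : det2 a b c = 0) :
    Collinear ℝ ({a, b, c} : Set Pt) := by
  rcases eq_or_ne a b with rfl | hab
  · simpa using collinear_pair ℝ a c
  have hn : (b.1 - a.1) ^ 2 + (b.2 - a.2) ^ 2 ≠ 0 := by
    intro h0
    apply hab
    ext <;> nlinarith [sq_nonneg (b.1 - a.1), sq_nonneg (b.2 - a.2)]
  -- the coefficient of the orthogonal projection of `c - a` onto `b - a`
  set r := ((c.1 - a.1) * (b.1 - a.1) + (c.2 - a.2) * (b.2 - a.2)) /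
    ((b.1 - a.1) ^ 2 + (b.2 - a.2) ^ 2)
  rw [collinear_iff_of_mem (Set.mem_insert a _)]
  refine ⟨b - a, ?_⟩
  simp only [Set.mem_insert_iff, Set.mem_singleton_iff, forall_eq_or_imp, forall_eq]
  refine ⟨⟨0, by simp⟩, ⟨1, by simp⟩, ⟨r, ?_⟩⟩
  simp only [det2] at h
  rw [vadd_eq_add]
  ext <;> simp only [Prod.fst_add, Prod.snd_add, Prod.smul_fst, Prod.smul_snd, Prod.fst_sub,
    Prod.snd_sub, smul_eq_mul, r] <;> field_simp
  · linear_combination (a.2 - b.2) * h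
  · linear_combination (b.1 - a.1) * h

lemma det2_eq_zero_of_mem_openSegment {a b x : Pt} (hx : x ∈ openSegment ℝ a b) :
    det2 a b x = 0 := by
  obtain ⟨t, -, rfl⟩ := (openSegment_eq_image ℝ a b).subset hx
  simp [det2_one_sub_smul_add_smul]

lemma SegCross.symm {a b c d : Pt} (h : SegCross a b c d) : SegCross c d a b :=
  let ⟨x, hab, hcd⟩ := h; ⟨x, hcd, hab⟩

lemma segCross_swap_left {a b c d : Pt} : SegCross b a c d ↔ SegCross a b c d := by
  simp only [SegCross, openSegment_symm ℝ b a]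

lemma segCross_swap_right {a b c d : Pt} : SegCross a b d c ↔ SegCross a b c d := by
  simp only [SegCross, openSegment_symm ℝ d c]

lemma SegCross.exists_det2_comb {a b c d : Pt} (h : SegCross a b c d) :
    ∃ s : ℝ, 0 < s ∧ s < 1 ∧ (1 - s) * det2 a b c + s * det2 a b d = 0 := by
  obtain ⟨x, hab, hcd⟩ := h
  obtain ⟨s, ⟨hs0, hs1⟩, rfl⟩ := (openSegment_eq_image ℝ c d).subset hcd
  refine ⟨s, hs0, hs1, ?_⟩
  rw [← det2_one_sub_smul_add_smul]
  exact det2_eq_zero_of_mem_openSegment hab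

lemma SegCross.det2_mul_det2_nonpos {a b c d : Pt} (h : SegCross a b c d) :
    det2 a b c * det2 a b d ≤ 0 := by
  obtain ⟨s, hs0, hs1, hs⟩ := h.exists_det2_comb
  have key : (1 - s) * (det2 a b c * det2 a b d) = -(s * det2 a b d ^ 2) := by
    linear_combination det2 a b d * hs
  have : -(s * det2 a b d ^ 2) ≤ 0 := neg_nonpos.2 (by positivity)
  exact nonpos_of_mul_nonpos_right (key ▸ this) (sub_pos.2 hs1)

lemma SegCross.det2_eq_zero_iff {a b c d : Pt} (h : SegCross a b c d) :
    det2 a b c = 0 ↔ det2 a b d = 0 := by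
  obtain ⟨s, hs0, hs1, hs⟩ := h.exists_det2_comb
  constructor <;> intro h0 <;> rw [h0] at hs
  · simpa [hs0.ne'] using hs
  · simpa [(sub_pos.2 hs1).ne'] using hs

lemma div_sub_mem_Ioo_of_mul_neg {x y : ℝ} (h : x * y < 0) : x / (x - y) ∈ Set.Ioo 0 1 := by
  rcases mul_neg_iff.1 h with ⟨hx, hy⟩ | ⟨hx, hy⟩
  · exact ⟨div_pos hx (by linarith), (div_lt_one (by linarith)).2 (by linarith)⟩
  · exact ⟨div_pos_of_neg_of_neg hx (by linarith),
      (div_lt_one_of_neg (by linarith)).2 (by linarith)⟩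

lemma segCross_of_det2_mul_neg {a b c d : Pt} (h₁ : det2 c d a * det2 c d b < 0)
    (h₂ : det2 a b c * det2 a b d < 0) : SegCross a b c d := by
  have ht := div_sub_mem_Ioo_of_mul_neg h₁
  have hs := div_sub_mem_Ioo_of_mul_neg h₂
  have hAB : det2 c d a - det2 c d b ≠ 0 :=
    sub_ne_zero.2 fun h => by rw [h] at h₁; nlinarith [mul_self_nonneg (det2 c d b)]
  have hCD : det2 a b c - det2 a b d ≠ 0 :=
    sub_ne_zero.2 fun h => by rw [h] at h₂; nlinarith [mul_self_nonneg (det2 a b d)]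
  refine ⟨_, (openSegment_eq_image ℝ a b).superset ⟨_, ht, rfl⟩,
    (openSegment_eq_image ℝ c d).superset ⟨_, hs, ?_⟩⟩
  ext <;> simp only [det2, Prod.fst_add, Prod.snd_add, Prod.smul_fst, Prod.smul_snd,
    smul_eq_mul] at hAB hCD ⊢ <;> field_simp <;> ring

lemma mem_convexHull_of_det2_nonneg {a b c w : Pt} (hab : 0 ≤ det2 a b w) (hbc : 0 ≤ det2 b c w)
    (hca : 0 ≤ det2 c a w) (habc : 0 < det2 a b c) : w ∈ convexHull ℝ {a, b, c} := by
  have hw : w = ∑ i, ![det2 b c w / det2 a b c, det2 c a w / det2 a b c,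
      det2 a b w / det2 a b c] i • ![a, b, c] i := by
    rw [det2_eq_add_add a b c w] at habc ⊢
    simp only [Fin.sum_univ_three, Matrix.cons_val_zero, Matrix.cons_val_one, Matrix.cons_val_two,
      Matrix.tail_cons, Matrix.head_cons]
    ext <;> simp only [det2, Prod.fst_add, Prod.snd_add, Prod.smul_fst, Prod.smul_snd,
      smul_eq_mul] at habc ⊢ <;> field_simp <;> ring
  rw [hw]
  refine (convex_convexHull ℝ _).sum_mem (fun i _ => ?_) ?_ (fun i _ => subset_convexHull ℝ _ ?_)
  · fin_cases i <;> simp only [Fin.zero_eta, Fin.mk_one, Fin.reduceFinMk, Matrix.cons_val]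
      <;> positivity
  · simp only [Fin.sum_univ_three, Matrix.cons_val_zero, Matrix.cons_val_one, Matrix.cons_val_two,
      Matrix.tail_cons, Matrix.head_cons]
    rw [← add_div, ← add_div, div_eq_one_iff_eq habc.ne', det2_eq_add_add a b c w]
  · fin_cases i <;> simp

lemma notMem_extremePoints_of_det2_pos {s : Set Pt} {a b c w : Pt} (ha : a ∈ s) (hb : b ∈ s)
    (hc : c ∈ s) (hab : 0 < det2 a b w) (hbc : 0 < det2 b c w) (hca : 0 < det2 c a w) :
    w ∉ (convexHull ℝ s).extremePoints ℝ := by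
  intro hw
  have habc : 0 < det2 a b c := by rw [det2_eq_add_add a b c w]; positivity
  have hsub : convexHull ℝ {a, b, c} ⊆ convexHull ℝ s :=
    convexHull_mono (by simp [Set.insert_subset_iff, ha, hb, hc])
  have hw' := extremePoints_convexHull_subset
    (inter_extremePoints_subset_extremePoints_of_subset hsub
      ⟨mem_convexHull_of_det2_nonneg hab.le hbc.le hca.le habc, hw⟩)
  rcases hw' with rfl | rfl | rfl
  · simp at hab
  · simp at hbc
  · simp at hca

lemma GenPos.det2_ne_zero {V : Type} {p : V → Pt} (hp : GenPos p) {u v w : V} (huv : u ≠ v)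
    (huw : u ≠ w) (hvw : v ≠ w) : det2 (p u) (p v) (p w) ≠ 0 :=
  fun h => hp.2 u v w huv huw hvw (collinear_of_det2_eq_zero h)

lemma ConvexPos.not_inside_triangle {V : Type} {p : V → Pt} (hconv : ConvexPos p) (u v w z : V)
    (huv : 0 < det2 (p u) (p v) (p z)) (hvw : 0 < det2 (p v) (p w) (p z))
    (hwu : 0 < det2 (p w) (p u) (p z)) : False :=
  notMem_extremePoints_of_det2_pos (Set.mem_range_self u) (Set.mem_range_self v)
    (Set.mem_range_self w) huv hvw hwu (hconv z)

/-- Otherwise `z` would lie inside the triangle `u v w`. -/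
lemma ConvexPos.det2_pos_trans {V : Type} {p : V → Pt} (hgen : GenPos p) (hconv : ConvexPos p)
    {z u v w : V} (huv : 0 < det2 (p z) (p u) (p v)) (hvw : 0 < det2 (p z) (p v) (p w))
    (huw : u ≠ w) : 0 < det2 (p z) (p u) (p w) := by
  have hzu : z ≠ u := by rintro rfl; simp [det2] at huv
  have hzw : z ≠ w := by rintro rfl; rw [← det2_rotate] at hvw; simp at hvw
  refine (hgen.det2_ne_zero hzu hzw huw).lt_or_gt.resolve_left fun hneg => ?_
  refine hconv.not_inside_triangle u v w z ?_ ?_ ?_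
  · rwa [det2_rotate]
  · rwa [det2_rotate]
  · rw [det2_rotate, det2_swap]; linarith

/-- The counterclockwise order of the vertices as seen from `b`, with `b` first. -/
def ccwFrom {V : Type} (p : V → Pt) (b u v : V) : Prop :=
  u = b ∧ v ≠ b ∨ u ≠ b ∧ v ≠ b ∧ 0 < det2 (p b) (p u) (p v)

lemma isStrictTotalOrder_ccwFrom {V : Type} {p : V → Pt} (hgen : GenPos p) (hconv : ConvexPos p)
    (b : V) : IsStrictTotalOrder V (ccwFrom p b) where
  irrefl u := by rintro (⟨rfl, h⟩ | ⟨-, -, h⟩) <;> simp_all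
  trans u v w := by
    rintro (⟨rfl, hv⟩ | ⟨hu, hv, huv⟩) (⟨rfl, -⟩ | ⟨-, hw, hvw⟩)
    · exact absurd rfl hv
    · exact .inl ⟨rfl, hw⟩
    · exact absurd rfl hv
    · rcases eq_or_ne u w with rfl | huw
      · rw [det2_swap] at hvw; linarith
      · exact .inr ⟨hu, hw, hconv.det2_pos_trans hgen huv hvw huw⟩
  trichotomous u v huv hvu := by
    by_contra hne
    unfold ccwFrom at huv hvu
    rcases eq_or_ne u b with rfl | hu
    · exact huv (.inl ⟨rfl, Ne.symm hne⟩)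
    rcases eq_or_ne v b with rfl | hv
    · exact hvu (.inl ⟨rfl, hne⟩)
    rcases (hgen.det2_ne_zero (Ne.symm hu) (Ne.symm hv) hne).lt_or_gt with h | h
    · exact hvu (.inr ⟨hv, hu, by rw [det2_swap]; linarith⟩)
    · exact huv (.inr ⟨hu, hv, h⟩)

lemma exists_equiv_fin_of_isStrictTotalOrder {V : Type} [Fintype V] (r : V → V → Prop)
    [IsStrictTotalOrder V r] : ∃ σ : Fin (Fintype.card V) ≃ V, ∀ ⦃i j⦄, i < j → r (σ i) (σ j) := by
  let := linearOrderOfSTO r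
  exact ⟨(Fintype.orderIsoFinOfCardEq V rfl).toEquiv,
    fun i j hij => (Fintype.orderIsoFinOfCardEq V rfl).strictMono hij⟩

/-- The points `q i` are listed counterclockwise along a convex curve. -/
def CCWOrdered {ι : Type*} [LinearOrder ι] (q : ι → Pt) : Prop :=
  ∀ ⦃i j k : ι⦄, i < j → j < k → 0 < det2 (q i) (q j) (q k)

lemma ConvexPos.exists_ccwOrdered {V : Type} [Fintype V] {p : V → Pt} (hgen : GenPos p)
    (hconv : ConvexPos p) (b : V) : ∃ σ : Fin (Fintype.card V) ≃ V, CCWOrdered (p ∘ σ) := by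
  have := isStrictTotalOrder_ccwFrom hgen hconv b
  obtain ⟨σ, hσ⟩ := exists_equiv_fin_of_isStrictTotalOrder (ccwFrom p b)
  refine ⟨σ, fun i j k hij hjk => ?_⟩
  have hij' := σ.injective.ne hij.ne
  have hjk' := σ.injective.ne hjk.ne
  have hik' := σ.injective.ne (hij.trans hjk).ne
  rcases hσ hij with ⟨hi, -⟩ | ⟨hi, hj, h₁⟩
  · rcases hσ hjk with ⟨hj, -⟩ | ⟨-, -, h₂⟩
    · exact absurd (hi.trans hj.symm) hij'
    · simpa [hi] using h₂
  obtain ⟨-, hk, h₂⟩ := (hσ hjk).resolve_left fun h => hj h.1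
  obtain ⟨-, -, h₃⟩ := (hσ (hij.trans hjk)).resolve_left fun h => hi h.1
  refine (hgen.det2_ne_zero hij' hik' hjk').lt_or_gt.resolve_left fun hneg => ?_
  refine hconv.not_inside_triangle b (σ i) (σ k) (σ j) h₁ ?_ ?_
  · rw [det2_swap]; linarith
  · rwa [← det2_rotate]

namespace ChordDiagram

open Finset

variable {α : Type*} [LinearOrder α]

/-- The chords `e` and `f` of a circle whose points are ordered by `α` cross. -/
def Interleave (e f : α × α) : Prop :=
  e.1 < f.1 ∧ f.1 < e.2 ∧ e.2 < f.2 ∨ f.1 < e.1 ∧ e.1 < f.2 ∧ f.2 < e.2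

lemma Interleave.symm {e f : α × α} (h : Interleave e f) : Interleave f e := by
  unfold Interleave at *; tauto

lemma Interleave.endpoint_mem_Ioo {e f : α × α} (h : Interleave e f) :
    f.1 ∈ Set.Ioo e.1 e.2 ∨ f.2 ∈ Set.Ioo e.1 e.2 := by
  rcases h with ⟨h₁, h₂, -⟩ | ⟨-, h₁, h₂⟩
  · exact .inl ⟨h₁, h₂⟩
  · exact .inr ⟨h₁, h₂⟩

def between (S : Finset α) (e : α × α) : Finset α := {s ∈ S | s ∈ Set.Ioo e.1 e.2}

lemma between_ssubset_between {S : Finset α} {e f : α × α} (h₁ : e.1 ≤ f.1) (h₂ : f.2 ≤ e.2)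
    {s : α} (hs : s ∈ between S e) (hs' : s ∉ between S f) : between S f ⊂ between S e := by
  refine ssubset_iff_of_subset (fun t ht => ?_) |>.2 ⟨s, hs, hs'⟩
  simp only [between, mem_filter, Set.mem_Ioo] at ht ⊢
  exact ⟨ht.1, h₁.trans_lt ht.2.1, ht.2.2.trans_le h₂⟩

/-- `e` is a diagonal of the convex polygon with vertex set `S`. -/
def IsDiagonal (S : Finset α) (e : α × α) : Prop :=
  e.1 ∈ S ∧ e.2 ∈ S ∧ (between S e).Nonempty ∧ ∃ s ∈ S, s < e.1 ∨ e.2 < s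

lemma IsDiagonal.fst_lt_snd {S : Finset α} {e : α × α} (h : IsDiagonal S e) : e.1 < e.2 :=
  let ⟨_, hs⟩ := h.2.2.1; (mem_filter.1 hs).2.1.trans (mem_filter.1 hs).2.2

lemma Interleave.isDiagonal {S : Finset α} {e f : α × α} (h : Interleave e f) (he : e.1 ∈ S)
    (he' : e.2 ∈ S) (hf : f.1 ∈ S) (hf' : f.2 ∈ S) : IsDiagonal S e := by
  refine ⟨he, he', ?_⟩
  rcases h with ⟨h₁, h₂, h₃⟩ | ⟨h₁, h₂, h₃⟩
  · exact ⟨⟨f.1, mem_filter.2 ⟨hf, h₁, h₂⟩⟩, f.2, hf', .inr h₃⟩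
  · exact ⟨⟨f.2, mem_filter.2 ⟨hf', h₂, h₃⟩⟩, f.1, hf, .inl h₁⟩

noncomputable def freeDiagonals (S : Finset α) (A : Finset (α × α)) : Finset (α × α) :=
  {e ∈ S ×ˢ S | IsDiagonal S e ∧ e ∉ A ∧ ∀ f ∈ A, ¬ Interleave e f}

lemma mem_freeDiagonals {S : Finset α} {A : Finset (α × α)} {e : α × α} :
    e ∈ freeDiagonals S A ↔ e ∈ S ×ˢ S ∧ IsDiagonal S e ∧ e ∉ A ∧ ∀ f ∈ A, ¬ Interleave e f :=
  mem_filter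

/-- The two fans `(x, i)` and `(i, y)` of diagonals inside the chord `(x, y)`. -/
lemma exists_fan {S : Finset α} {x y : α} (hx : x ∈ S) (hy : y ∈ S) :
    ∃ F : Finset (α × α), (∀ e ∈ F, IsDiagonal S e ∧ x ≤ e.1 ∧ e.2 ≤ y ∧
      (e.1 ∈ between S (x, y) ∨ e.2 ∈ between S (x, y))) ∧
      2 * (#(between S (x, y)) : ℤ) - 2 ≤ #F := by
  set I := between S (x, y)
  rcases I.eq_empty_or_nonempty with hI | hI
  · exact ⟨∅, by simp, by simp [hI]⟩
  have memI {i} : i ∈ I ↔ i ∈ S ∧ x < i ∧ i < y := by simp [I, between]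
  have hmin := memI.1 (I.min'_mem hI)
  have hmax := memI.1 (I.max'_mem hI)
  refine ⟨(I.erase (I.min' hI)).image (x, ·) ∪ (I.erase (I.max' hI)).image (·, y), ?_, ?_⟩
  · simp only [mem_union, mem_image, mem_erase]
    rintro _ (⟨i, ⟨hne, hi⟩, rfl⟩ | ⟨i, ⟨hne, hi⟩, rfl⟩)
    · have hi' := memI.1 hi
      refine ⟨⟨hx, hi'.1, ⟨I.min' hI, ?_⟩, y, hy, .inr hi'.2.2⟩, le_rfl, hi'.2.2.le, .inr hi⟩
      exact mem_filter.2 ⟨hmin.1, hmin.2.1, lt_of_le_of_ne (I.min'_le i hi) (Ne.symm hne)⟩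
    · have hi' := memI.1 hi
      refine ⟨⟨hi'.1, hy, ⟨I.max' hI, ?_⟩, x, hx, .inl hi'.2.1⟩, hi'.2.1.le, le_rfl, .inl hi⟩
      exact mem_filter.2 ⟨hmax.1, lt_of_le_of_ne (I.le_max' i hi) hne, hmax.2.2⟩
  · have hdisj : Disjoint ((I.erase (I.min' hI)).image (x, ·))
        ((I.erase (I.max' hI)).image (·, y)) := by
      simp only [disjoint_left, mem_image, mem_erase]
      rintro _ ⟨i, -, rfl⟩ ⟨j, ⟨-, hj⟩, hji⟩
      exact (memI.1 hj).2.1.ne' (Prod.ext_iff.1 hji).1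
    rw [card_union_of_disjoint hdisj, card_image_of_injective _ (Prod.mk_right_injective x),
      card_image_of_injective _ (Prod.mk_left_injective y), card_erase_of_mem (I.min'_mem hI),
      card_erase_of_mem (I.max'_mem hI)]
    have := hI.card_pos
    omega

lemma IsDiagonal.mono {S T : Finset α} {e : α × α} (h : IsDiagonal S e) (hST : S ⊆ T) :
    IsDiagonal T e := by
  obtain ⟨h₁, h₂, ⟨s, hs⟩, t, ht, hte⟩ := h
  exact ⟨hST h₁, hST h₂, ⟨s, filter_subset_filter _ hST hs⟩, t, hST ht, hte⟩

lemma notMem_Ioo_of_innermost {S : Finset α} {A : Finset (α × α)} (hAS : A ⊆ S ×ˢ S)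
    (hA : (A : Set (α × α)).Pairwise fun e f => ¬ Interleave e f) {e₀ : α × α} (he₀ : e₀ ∈ A)
    (hmin : ∀ f ∈ A, #(between S e₀) ≤ #(between S f)) {f : α × α} (hf : f ∈ A) :
    f.1 ∉ Set.Ioo e₀.1 e₀.2 ∧ f.2 ∉ Set.Ioo e₀.1 e₀.2 := by
  have hfS := mem_product.1 (hAS hf)
  have not_between {s} : s ∉ between S f ↔ s ∉ Set.Ioo f.1 f.2 ∨ s ∉ S := by
    simp [between, or_comm, imp_iff_not_or]
  constructor
  · intro h₁
    have hne : e₀ ≠ f := by rintro rfl; exact h₁.1.false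
    rcases lt_or_ge e₀.2 f.2 with h₂ | h₂
    · exact hA he₀ hf hne (.inl ⟨h₁.1, h₁.2, h₂⟩)
    · exact (hmin f hf).not_gt (card_lt_card (between_ssubset_between h₁.1.le h₂
        (mem_filter.2 ⟨hfS.1, h₁⟩) (not_between.2 (.inl fun h => h.1.false))))
  · intro h₂
    have hne : e₀ ≠ f := by rintro rfl; exact h₂.2.false
    rcases lt_or_ge f.1 e₀.1 with h₁ | h₁
    · exact hA he₀ hf hne (.inr ⟨h₁, h₂.1, h₂.2⟩)
    · exact (hmin f hf).not_gt (card_lt_card (between_ssubset_between h₁ h₂.2.le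
        (mem_filter.2 ⟨hfS.2, h₂⟩) (not_between.2 (.inl fun h => h.2.false))))

lemma freeDiagonals_sdiff_between_subset {S : Finset α} {A : Finset (α × α)} {e₀ : α × α} :
    freeDiagonals (S \ between S e₀) (A.erase e₀) ⊆ freeDiagonals S A := by
  have hSI : S \ between S e₀ ⊆ S := sdiff_subset
  have not_mem_Ioo {s} (hs : s ∈ S \ between S e₀) : s ∉ Set.Ioo e₀.1 e₀.2 := fun h =>
    (mem_sdiff.1 hs).2 (mem_filter.2 ⟨(mem_sdiff.1 hs).1, h⟩)
  intro e he
  obtain ⟨hmem, hdiag, heA, hcross⟩ := mem_freeDiagonals.1 he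
  obtain ⟨he₁, he₂⟩ := mem_product.1 hmem
  refine mem_freeDiagonals.2 ⟨product_subset_product hSI hSI hmem, hdiag.mono hSI, fun h => ?_, ?_⟩
  · rcases eq_or_ne e e₀ with rfl | hne
    · obtain ⟨s, hs⟩ := hdiag.2.2.1
      exact not_mem_Ioo (mem_filter.1 hs).1 (mem_filter.1 hs).2
    · exact heA (mem_erase.2 ⟨hne, h⟩)
  · intro f hf hef
    rcases eq_or_ne f e₀ with rfl | hne
    · exact hef.symm.endpoint_mem_Ioo.elim (not_mem_Ioo he₁) (not_mem_Ioo he₂)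
    · exact hcross f (mem_erase.2 ⟨hne, hf⟩) hef

lemma subset_freeDiagonals_of_nested {S : Finset α} {A F : Finset (α × α)} {x y : α}
    (hF : ∀ e ∈ F, IsDiagonal S e ∧ x ≤ e.1 ∧ e.2 ≤ y ∧
      (e.1 ∈ between S (x, y) ∨ e.2 ∈ between S (x, y)))
    (hA : ∀ f ∈ A, f.1 ∉ Set.Ioo x y ∧ f.2 ∉ Set.Ioo x y) : F ⊆ freeDiagonals S A := by
  intro e he
  obtain ⟨hdiag, hx, hy, hI⟩ := hF e he
  have hIoo : e.1 ∈ Set.Ioo x y ∨ e.2 ∈ Set.Ioo x y :=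
    hI.imp (fun h => (mem_filter.1 h).2) (fun h => (mem_filter.1 h).2)
  refine mem_freeDiagonals.2 ⟨mem_product.2 ⟨hdiag.1, hdiag.2.1⟩, hdiag, fun heA => ?_,
    fun f hf hef => ?_⟩
  · exact hIoo.elim (hA e heA).1 (hA e heA).2
  · rcases hef.endpoint_mem_Ioo with h | h
    · exact (hA f hf).1 ⟨hx.trans_lt h.1, h.2.trans_le hy⟩
    · exact (hA f hf).2 ⟨hx.trans_lt h.1, h.2.trans_le hy⟩

lemma le_card_freeDiagonals_empty (S : Finset α) :
    2 * (#S : ℤ) - 6 ≤ #(freeDiagonals S ∅) := by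
  rcases S.eq_empty_or_nonempty with rfl | hS
  · simp
  obtain ⟨F, hF, hcard⟩ := exists_fan (S.min'_mem hS) (S.max'_mem hS)
  have hSI : S ⊆ insert (S.min' hS) (insert (S.max' hS) (between S (S.min' hS, S.max' hS))) := by
    intro s hs
    simp only [mem_insert, between, mem_filter, Set.mem_Ioo]
    rcases (S.min'_le s hs).lt_or_eq with h₁ | h₁
    · rcases (S.le_max' s hs).lt_or_eq with h₂ | h₂
      · exact .inr (.inr ⟨hs, h₁, h₂⟩)
      · exact .inr (.inl h₂)
    · exact .inl h₁.symm
  have hF' : F ⊆ freeDiagonals S ∅ := subset_freeDiagonals_of_nested hF (by simp)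
  have h₁ := card_le_card hSI
  have h₂ := card_le_card hF'
  have h₃ := card_insert_le (S.min' hS) (insert (S.max' hS) (between S (S.min' hS, S.max' hS)))
  have h₄ := card_insert_le (S.max' hS) (between S (S.min' hS, S.max' hS))
  omega

/-- Cut off an innermost chord together with the points inside it: the two fans inside that
chord make up for the points lost. -/
theorem le_card_freeDiagonals (S : Finset α) (A : Finset (α × α)) (hAS : A ⊆ S ×ˢ S)
    (hA : (A : Set (α × α)).Pairwise fun e f => ¬ Interleave e f) :
    2 * (#S : ℤ) - 6 - 2 * #A ≤ #(freeDiagonals S A) := by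
  induction A using Finset.strongInduction generalizing S with
  | H A ih =>
  rcases A.eq_empty_or_nonempty with rfl | hne
  · simpa using le_card_freeDiagonals_empty S
  obtain ⟨e₀, he₀, hmin⟩ := A.exists_min_image (fun e => #(between S e)) hne
  have hout {f} (hf : f ∈ A) := notMem_Ioo_of_innermost hAS hA he₀ hmin hf
  set I := between S e₀ with hI
  have hIS : I ⊆ S := filter_subset _ _
  have hA' : A.erase e₀ ⊆ (S \ I) ×ˢ (S \ I) := by
    intro f hf
    have hf' := mem_of_mem_erase hf
    obtain ⟨h₁, h₂⟩ := mem_product.1 (hAS hf')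
    refine mem_product.2 ⟨mem_sdiff.2 ⟨h₁, fun h => (hout hf').1 (mem_filter.1 h).2⟩,
      mem_sdiff.2 ⟨h₂, fun h => (hout hf').2 (mem_filter.1 h).2⟩⟩
  have hIH := ih (A.erase e₀) (erase_ssubset he₀) (S \ I) hA' (hA.mono (by simp))
  obtain ⟨F, hF, hcard⟩ := exists_fan (mem_product.1 (hAS he₀)).1 (mem_product.1 (hAS he₀)).2
  have hFA : F ⊆ freeDiagonals S A := subset_freeDiagonals_of_nested hF fun f hf => hout hf
  have hdisj : Disjoint F (freeDiagonals (S \ I) (A.erase e₀)) := by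
    refine disjoint_left.2 fun e he he' => ?_
    obtain ⟨h₁, h₂⟩ := mem_product.1 (mem_freeDiagonals.1 he').1
    exact (hF e he).2.2.2.elim (mem_sdiff.1 h₁).2 (mem_sdiff.1 h₂).2
  have hle := card_le_card (union_subset hFA (freeDiagonals_sdiff_between_subset (e₀ := e₀)))
  rw [card_union_of_disjoint hdisj] at hle
  rw [card_sdiff_of_subset hIS, card_erase_of_mem he₀] at hIH
  rw [Prod.mk.eta, ← hI] at hcard
  have := card_le_card hIS
  have := card_pos.2 hne
  omega

end ChordDiagram

section CCWOrdered

open ChordDiagram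

variable {ι : Type*} [LinearOrder ι] {q : ι → Pt}

lemma CCWOrdered.segCross_of_lt (hq : CCWOrdered q) {a b c d : ι} (hac : a < c) (hcb : c < b)
    (hbd : b < d) : SegCross (q a) (q b) (q c) (q d) := by
  refine segCross_of_det2_mul_neg (mul_neg_of_pos_of_neg ?_ ?_) (mul_neg_of_neg_of_pos ?_ ?_)
  · rw [det2_rotate]; exact hq hac (hcb.trans hbd)
  · rw [det2_swap]; exact neg_neg_of_pos (hq hcb hbd)
  · rw [det2_swap]; exact neg_neg_of_pos (hq hac hcb)
  · exact hq (hac.trans hcb) hbd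

lemma CCWOrdered.segCross_iff (hq : CCWOrdered q) {a b c d : ι} (hab : a < b) (hcd : c < d)
    (hne : (a, b) ≠ (c, d)) : SegCross (q a) (q b) (q c) (q d) ↔ Interleave (a, b) (c, d) := by
  refine ⟨fun h => ?_, ?_⟩
  swap
  · rintro (⟨h₁, h₂, h₃⟩ | ⟨h₁, h₂, h₃⟩)
    · exact hq.segCross_of_lt h₁ h₂ h₃
    · exact (hq.segCross_of_lt h₁ h₂ h₃).symm
  wlog hac : a ≤ c generalizing a b c d
  · exact (this hcd hab (Ne.symm hne) h.symm (not_le.1 hac).le).symm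
  rcases hac.lt_or_eq with hac | rfl
  · rcases lt_trichotomy c b with hcb | rfl | hbc
    · rcases lt_trichotomy b d with hbd | rfl | hdb
      · exact .inl ⟨hac, hcb, hbd⟩
      · have := h.det2_eq_zero_iff.2 (det2_self_right _ _)
        rw [det2_swap, neg_eq_zero] at this
        exact absurd this (hq hac hcb).ne'
      · have := h.det2_mul_det2_nonpos
        rw [det2_swap, det2_swap (q a) (q d) (q b)] at this
        nlinarith [hq hac hcb, hq (hac.trans hcd) hdb]
    · exact absurd (h.det2_eq_zero_iff.1 (det2_self_right _ _)) (hq hac hcd).ne'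
    · have := h.symm.det2_mul_det2_nonpos
      rw [det2_rotate, det2_rotate (q b)] at this
      nlinarith [hq (hab.trans hbc) hcd, hq hbc hcd]
  · have hbd : b ≠ d := fun h => hne (by rw [h])
    have := h.det2_eq_zero_iff.1 (det2_self_left _ _)
    rcases hbd.lt_or_gt with hbd | hdb
    · exact absurd this (hq hab hbd).ne'
    · rw [det2_swap, neg_eq_zero] at this
      exact absurd this (hq hcd hdb).ne'

end CCWOrdered

section Saturation

variable {V : Type} {k : ℕ} {G : SimpleGraph V} {p : V → Pt} {φ : Sym2 V → Fin k}

lemma edgeCross_mk_iff {u v x y : V} :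
    EdgeCross p s(u, v) s(x, y) ↔ SegCross (p u) (p v) (p x) (p y) := by
  refine ⟨?_, fun h => ⟨u, v, x, y, rfl, rfl, h⟩⟩
  rintro ⟨a, b, c, d, h₁, h₂, h⟩
  rcases Sym2.eq_iff.1 h₁ with ⟨rfl, rfl⟩ | ⟨rfl, rfl⟩ <;>
    rcases Sym2.eq_iff.1 h₂ with ⟨rfl, rfl⟩ | ⟨rfl, rfl⟩
  exacts [h, segCross_swap_right.1 h, segCross_swap_left.1 h,
    segCross_swap_left.1 (segCross_swap_right.1 h)]

lemma EdgeCross.symm {e f : Sym2 V} (h : EdgeCross p e f) : EdgeCross p f e :=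
  let ⟨u, v, x, y, he, hf, h⟩ := h; ⟨x, y, u, v, hf, he, h.symm⟩

lemma PrecoloredSaturated.exists_crossing_edge (hsat : PrecoloredSaturated G p φ)
    (hφ : CrossingFree G p φ) {u v : V} (huv : u ≠ v) (hadj : ¬ G.Adj u v) (c : Fin k) :
    ∃ f ∈ G.edgeSet, φ f = c ∧ EdgeCross p s(u, v) f := by
  have hnot : s(u, v) ∉ G.edgeSet := hadj
  have := hsat u v huv hadj c
  simp only [CrossingFree, SimpleGraph.edgeSet_sup, SimpleGraph.edgeSet_fromEdgeSet,
    Set.mem_union, Set.mem_sdiff, Set.mem_singleton_iff, not_forall, not_not] at this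
  obtain ⟨e, he, f, hf, hef, hc, hcross⟩ := this
  rcases he with he | ⟨rfl, -⟩ <;> rcases hf with hf | ⟨rfl, -⟩
  · rw [if_neg (ne_of_mem_of_not_mem he hnot), if_neg (ne_of_mem_of_not_mem hf hnot)] at hc
    exact absurd hcross (hφ e he f hf hef hc)
  · rw [if_neg (ne_of_mem_of_not_mem he hnot), if_pos rfl] at hc
    exact ⟨e, he, hc, hcross.symm⟩
  · rw [if_pos rfl, if_neg (ne_of_mem_of_not_mem hf hnot)] at hc
    exact ⟨f, hf, hc.symm, hcross⟩
  · exact absurd rfl hef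

end Saturation

section Chords

open ChordDiagram

variable {ι V : Type} [LinearOrder ι] {k : ℕ} {G : SimpleGraph V} {p : V → Pt}
  {φ : Sym2 V → Fin k} {σ : ι ≃ V}

def chord (σ : ι ≃ V) (e : ι × ι) : Sym2 V := s(σ e.1, σ e.2)

lemma chord_injective_of_lt {e f : ι × ι} (he : e.1 < e.2) (hf : f.1 < f.2)
    (h : chord σ e = chord σ f) : e = f := by
  rcases Sym2.eq_iff.1 h with ⟨h₁, h₂⟩ | ⟨h₁, h₂⟩
  · exact Prod.ext (σ.injective h₁) (σ.injective h₂)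
  · rw [σ.injective h₁, σ.injective h₂] at he
    exact absurd he hf.not_gt

lemma exists_chord_eq (σ : ι ≃ V) {g : Sym2 V} (hg : ¬ g.IsDiag) :
    ∃ f : ι × ι, f.1 < f.2 ∧ chord σ f = g := by
  induction g using Sym2.ind with | _ x y => ?_
  have hxy : σ.symm x ≠ σ.symm y := σ.symm.injective.ne (by simpa using hg)
  rcases hxy.lt_or_gt with h | h
  · exact ⟨(σ.symm x, σ.symm y), h, by simp [chord]⟩
  · exact ⟨(σ.symm y, σ.symm x), h, by simp [chord, Sym2.eq_swap]⟩

lemma CCWOrdered.edgeCross_chord_iff (hq : CCWOrdered (p ∘ σ)) {e f : ι × ι} (he : e.1 < e.2)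
    (hf : f.1 < f.2) (hne : e ≠ f) :
    EdgeCross p (chord σ e) (chord σ f) ↔ Interleave e f :=
  edgeCross_mk_iff.trans (hq.segCross_iff he hf hne)

lemma exists_interleave_of_chord_notMem (hq : CCWOrdered (p ∘ σ))
    (hsat : PrecoloredSaturated G p φ) (hφ : CrossingFree G p φ) {e : ι × ι} (he : e.1 < e.2)
    (hG : chord σ e ∉ G.edgeSet) (c : Fin k) :
    ∃ f : ι × ι, f.1 < f.2 ∧ chord σ f ∈ G.edgeSet ∧ φ (chord σ f) = c ∧ Interleave e f := by
  obtain ⟨g, hg, hgc, hcross⟩ :=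
    hsat.exists_crossing_edge hφ (σ.injective.ne he.ne) hG c
  obtain ⟨f, hf, rfl⟩ := exists_chord_eq σ (G.not_isDiag_of_mem_edgeSet hg)
  have hne : e ≠ f := by rintro rfl; exact hG hg
  exact ⟨f, hf, hg, hgc, (hq.edgeCross_chord_iff he hf hne).1 hcross⟩

end Chords

section Count

open ChordDiagram Finset

variable {V : Type} {k m : ℕ} {G : SimpleGraph V} {p : V → Pt} {φ : Sym2 V → Fin k}
  {σ : Fin m ≃ V}

noncomputable def diagonalEdges (G : SimpleGraph V) (σ : Fin m ≃ V) : Finset (Fin m × Fin m) :=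
  {e | IsDiagonal univ e ∧ chord σ e ∈ G.edgeSet}

noncomputable def diagonalEdgesOfColor (G : SimpleGraph V) (φ : Sym2 V → Fin k) (σ : Fin m ≃ V)
    (c : Fin k) : Finset (Fin m × Fin m) :=
  {e ∈ diagonalEdges G σ | φ (chord σ e) = c}

lemma mem_diagonalEdgesOfColor {c : Fin k} {e : Fin m × Fin m} :
    e ∈ diagonalEdgesOfColor G φ σ c ↔
      IsDiagonal univ e ∧ chord σ e ∈ G.edgeSet ∧ φ (chord σ e) = c := by
  simp [diagonalEdgesOfColor, diagonalEdges, and_assoc]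

/-- Nothing crosses a side of the polygon. -/
lemma chord_mem_edgeSet_of_not_isDiagonal (hq : CCWOrdered (p ∘ σ))
    (hsat : PrecoloredSaturated G p φ) (hφ : CrossingFree G p φ) {e : Fin m × Fin m}
    (he : e.1 < e.2) (hd : ¬ IsDiagonal univ e) : chord σ e ∈ G.edgeSet := by
  by_contra hG
  obtain ⟨f, -, -, -, hef⟩ := exists_interleave_of_chord_notMem hq hsat hφ he hG (φ (chord σ e))
  exact hd (hef.isDiagonal (mem_univ _) (mem_univ _) (mem_univ _) (mem_univ _))

lemma pairwise_not_interleave_diagonalEdgesOfColor (hq : CCWOrdered (p ∘ σ))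
    (hφ : CrossingFree G p φ) (c : Fin k) :
    (diagonalEdgesOfColor G φ σ c : Set (Fin m × Fin m)).Pairwise
      fun e f => ¬ Interleave e f := by
  intro e he f hf hne hef
  obtain ⟨hed, heG, hec⟩ := mem_diagonalEdgesOfColor.1 he
  obtain ⟨hfd, hfG, hfc⟩ := mem_diagonalEdgesOfColor.1 hf
  refine hφ _ heG _ hfG (fun h => hne (chord_injective_of_lt hed.fst_lt_snd hfd.fst_lt_snd h))
    (hec.trans hfc.symm) ?_
  exact (hq.edgeCross_chord_iff hed.fst_lt_snd hfd.fst_lt_snd hne).2 hef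

lemma freeDiagonals_subset_diagonalEdges_sdiff (hq : CCWOrdered (p ∘ σ))
    (hsat : PrecoloredSaturated G p φ) (hφ : CrossingFree G p φ) (c : Fin k) :
    freeDiagonals univ (diagonalEdgesOfColor G φ σ c) ⊆
      diagonalEdges G σ \ diagonalEdgesOfColor G φ σ c := by
  intro e he
  obtain ⟨-, hd, heA, hfree⟩ := mem_freeDiagonals.1 he
  have hG : chord σ e ∈ G.edgeSet := by
    by_contra hG
    obtain ⟨f, -, hfG, hfc, hef⟩ :=
      exists_interleave_of_chord_notMem hq hsat hφ hd.fst_lt_snd hG c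
    refine hfree f (mem_diagonalEdgesOfColor.2 ⟨?_, hfG, hfc⟩) hef
    exact hef.symm.isDiagonal (mem_univ _) (mem_univ _) (mem_univ _) (mem_univ _)
  exact mem_sdiff.2 ⟨mem_filter.2 ⟨mem_univ _, hd, hG⟩, heA⟩

lemma two_mul_sub_six_le_card_diagonalEdges_add (hq : CCWOrdered (p ∘ σ))
    (hsat : PrecoloredSaturated G p φ) (hφ : CrossingFree G p φ) (c : Fin k) :
    2 * (m : ℤ) - 6 ≤ #(diagonalEdges G σ) + #(diagonalEdgesOfColor G φ σ c) := by
  have hsub : diagonalEdgesOfColor G φ σ c ⊆ diagonalEdges G σ := filter_subset _ _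
  have h₁ := le_card_freeDiagonals univ (diagonalEdgesOfColor G φ σ c) (by simp)
    (pairwise_not_interleave_diagonalEdgesOfColor hq hφ c)
  have h₂ := card_le_card (freeDiagonals_subset_diagonalEdges_sdiff hq hsat hφ c)
  rw [card_sdiff_of_subset hsub] at h₂
  have h₃ := card_le_card hsub
  rw [card_univ, Fintype.card_fin] at h₁
  omega

variable (m) in
noncomputable def sides : Finset (Fin m × Fin m) := {e | e.1 < e.2 ∧ ¬ IsDiagonal univ e}

lemma le_card_sides (hm : 3 ≤ m) : m ≤ #(sides m) := by
  obtain ⟨l, rfl⟩ : ∃ l, m = l + 1 := ⟨m - 1, by omega⟩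
  have hsides : insert (0, Fin.last l) (univ.image fun i : Fin l => (i.castSucc, i.succ)) ⊆
      sides (l + 1) := by
    simp only [sides, insert_subset_iff, image_subset_iff, mem_filter, mem_univ, true_and]
    refine ⟨⟨Fin.lt_def.2 (by simp; omega), fun hd => ?_⟩, fun i _ => ⟨Fin.castSucc_lt_succ, ?_⟩⟩
    · obtain ⟨s, -, hs⟩ := hd.2.2.2
      exact hs.elim (Fin.not_lt_zero s) (Fin.le_last s).not_gt
    · rintro ⟨-, -, ⟨s, hs⟩, -⟩
      obtain ⟨-, h₁, h₂⟩ := mem_filter.1 hs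
      exact (Fin.castSucc_lt_iff_succ_le.1 h₁).not_gt h₂
  have hnot : (0, Fin.last l) ∉ univ.image fun i : Fin l => (i.castSucc, i.succ) := by
    simp only [mem_image, mem_univ, true_and, Prod.ext_iff, Fin.ext_iff, not_exists]
    intro i h
    simp only [Fin.val_castSucc, Fin.coe_ofNat_eq_mod, Nat.zero_mod, Fin.val_succ,
      Fin.val_last] at h
    omega
  have := card_le_card hsides
  rwa [card_insert_of_notMem hnot, card_image_of_injective _ fun i j h =>
    Fin.castSucc_injective _ (Prod.ext_iff.1 h).1, card_univ, Fintype.card_fin] at this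

lemma add_card_diagonalEdges_le (hm : 3 ≤ m) (hq : CCWOrdered (p ∘ σ))
    (hsat : PrecoloredSaturated G p φ) (hφ : CrossingFree G p φ) :
    m + #(diagonalEdges G σ) ≤ G.edgeSet.ncard := by
  have : Finite V := Finite.of_equiv _ σ
  have hdisj : Disjoint (sides m) (diagonalEdges G σ) :=
    disjoint_filter.2 fun e _ h₁ h₂ => h₁.2 h₂.1
  have hlt : ∀ e ∈ sides m ∪ diagonalEdges G σ, e.1 < e.2 := by
    simp only [mem_union, mem_filter, sides, diagonalEdges]
    rintro e (⟨-, h, -⟩ | ⟨-, h, -⟩)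
    exacts [h, h.fst_lt_snd]
  have hmaps : ∀ e ∈ (↑(sides m ∪ diagonalEdges G σ) : Set _), chord σ e ∈ G.edgeSet := by
    simp only [coe_union, Set.mem_union, mem_coe, mem_filter, sides, diagonalEdges]
    rintro e (⟨-, h, hd⟩ | ⟨-, -, h⟩)
    exacts [chord_mem_edgeSet_of_not_isDiagonal hq hsat hφ h hd, h]
  have hle := Set.ncard_le_ncard_of_injOn _ hmaps
    (fun e he f hf h => chord_injective_of_lt (hlt e he) (hlt f hf) h) (Set.toFinite _)
  rw [Set.ncard_coe_finset, card_union_of_disjoint hdisj] at hle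
  have := le_card_sides hm
  omega

theorem CCWOrdered.mul_le_mul_ncard_edgeSet_sub (hm : 3 ≤ m) (hq : CCWOrdered (p ∘ σ))
    (hsat : PrecoloredSaturated G p φ) (hφ : CrossingFree G p φ) :
    (k : ℤ) * (2 * m - 6) ≤ (k + 1) * (G.edgeSet.ncard - m) := by
  have hU : ∑ c, (#(diagonalEdgesOfColor G φ σ c) : ℤ) = #(diagonalEdges G σ) := by
    rw [← Nat.cast_sum, card_eq_sum_card_fiberwise (f := fun e => φ (chord σ e)) (t := univ)
      (by simp)]
    rfl
  have hE : (m : ℤ) + #(diagonalEdges G σ) ≤ G.edgeSet.ncard := by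
    exact_mod_cast add_card_diagonalEdges_le hm hq hsat hφ
  calc (k : ℤ) * (2 * m - 6) = ∑ _c : Fin k, (2 * (m : ℤ) - 6) := by
        rw [sum_const, card_univ, Fintype.card_fin, nsmul_eq_mul]
    _ ≤ ∑ c, ((#(diagonalEdges G σ) : ℤ) + #(diagonalEdgesOfColor G φ σ c)) :=
      sum_le_sum fun c _ => two_mul_sub_six_le_card_diagonalEdges_add hq hsat hφ c
    _ = (k + 1) * #(diagonalEdges G σ) := by
      rw [sum_add_distrib, hU, sum_const, card_univ, Fintype.card_fin, nsmul_eq_mul]; ring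
    _ ≤ (k + 1) * (G.edgeSet.ncard - m) := by gcongr; linarith

end Count

/-- Every saturated precolored convex Θ^3-drawing of a graph on
`n ≥ 3` vertices has at least `5n/2 - 6` edges. -/
theorem stmt6 (n : ℕ) (hn : 3 ≤ n)
    (G : SimpleGraph (Fin n)) (p : Fin n → Pt) (φ : Sym2 (Fin n) → Fin 3)
    (hgen : GenPos p) (hconv : ConvexPos p)
    (hφ : CrossingFree G p φ) (hsat : PrecoloredSaturated G p φ) :
    2 * (G.edgeSet.ncard : ℤ) ≥ 5 * (n : ℤ) - 12 := by
  obtain ⟨σ, hσ⟩ := hconv.exists_ccwOrdered hgen ⟨0, by omega⟩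
  have := hσ.mul_le_mul_ncard_edgeSet_sub (by simpa using hn) hsat hφ
  simp only [Fintype.card_fin, Nat.cast_ofNat] at this
  linarith
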